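/- Let Π ∈ ℝ^{n×n} be an orthogonal projection matrix of rank k whose diagonal entries are all strictly positive. Let D = Diag(Π) be the diagonal matrix of the diagonal entries of Π, and let C = D^{-1/2} Π D^{-1/2} be the associated correlation matrix. Then with r = n − k, the off-diagonal entries of C satisfy ∑_{i<j} C_{ij}² ≤ 2r² + 6r. -/

import Mathlib

/-!
With `aᵢ = 1 - Pᵢᵢ`, the diagonal of the complementary projection `1 - P`, we have `∑ aᵢ = n - k`.
Cauchy–Schwarz on the rows of `P` and of `1 - P` gives `Pᵢⱼ² ≤ Pᵢᵢ Pⱼⱼ` and `Pᵢⱼ² ≤ aᵢ aⱼ`, whence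
`Cᵢⱼ² ≤ 4 aᵢ aⱼ + 2 Pᵢⱼ² / Pᵢᵢ + 2 Pᵢⱼ² / Pⱼⱼ`. Summing over `i < j`, and using that the off-diagonal
part of row `i` has `∑_{j ≠ i} Pᵢⱼ² = Pᵢᵢ aᵢ`, gives `∑_{i<j} Cᵢⱼ² ≤ 2 (n - k)² + 2 (n - k)`.
-/

open Matrix Finset

namespace Finset

variable {ι M : Type*}

theorem sum_offDiag_eq_sum_sub_sum_diag [DecidableEq ι] [AddCommGroup M] (s : Finset ι)
    (f : ι → ι → M) :
    ∑ q ∈ s.offDiag, f q.1 q.2 = ∑ i ∈ s, ∑ j ∈ s, f i j - ∑ i ∈ s, f i i := by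
  rw [← sum_product' s s f, ← diag_union_offDiag, sum_union (disjoint_diag_offDiag s),
    sum_diag, add_sub_cancel_left]

theorem sum_filter_lt_add_swap [LinearOrder ι] [Fintype ι] [AddCommMonoid M] (f : ι → ι → M) :
    ∑ q ∈ univ.filter (fun q : ι × ι => q.1 < q.2), (f q.1 q.2 + f q.2 q.1) =
      ∑ q ∈ univ.offDiag, f q.1 q.2 := by
  have hswap : ∑ q ∈ univ.filter (fun q : ι × ι => q.1 < q.2), f q.2 q.1 =
      ∑ q ∈ univ.offDiag.filter (fun q : ι × ι => ¬ q.1 < q.2), f q.1 q.2 := by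
    refine sum_nbij' Prod.swap Prod.swap ?_ ?_ (fun _ _ => rfl) (fun _ _ => rfl) fun _ _ => rfl
    · intro q hq
      simp only [mem_filter, mem_offDiag, mem_univ, true_and, Prod.fst_swap, Prod.snd_swap] at hq ⊢
      exact ⟨hq.ne', hq.not_gt⟩
    · intro q hq
      simp only [mem_filter, mem_offDiag, mem_univ, true_and, Prod.fst_swap, Prod.snd_swap] at hq ⊢
      exact lt_of_le_of_ne (not_lt.mp hq.2) hq.1.symm
  have hlt : univ.offDiag.filter (fun q : ι × ι => q.1 < q.2) =
      univ.filter (fun q : ι × ι => q.1 < q.2) := by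
    ext q
    simp only [mem_filter, mem_offDiag, mem_univ, true_and, and_iff_right_iff_imp]
    exact LT.lt.ne
  rw [sum_add_distrib, hswap, ← hlt, sum_filter_add_sum_filter_not]

theorem sum_offDiag_mul_le_sq_sum {R : Type*} [DecidableEq ι] [CommRing R] [LinearOrder R]
    [IsStrictOrderedRing R] (s : Finset ι) (f : ι → R) :
    ∑ q ∈ s.offDiag, f q.1 * f q.2 ≤ (∑ i ∈ s, f i) ^ 2 := by
  rw [sum_offDiag_eq_sum_sub_sum_diag s fun i j => f i * f j, ← sum_mul_sum, ← sq]
  exact sub_le_self _ (sum_nonneg fun i _ => mul_self_nonneg _)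

end Finset

namespace Matrix

variable {ι R : Type*} [Fintype ι]

theorem trace_eq_rank_of_isIdempotentElem [DecidableEq ι] [Field R] {P : Matrix ι ι R}
    (hP : IsIdempotentElem P) : P.trace = P.rank := by
  rw [← trace_toLin'_eq]
  exact (LinearMap.IsIdempotentElem.isProj_range _ (hP.map toLinAlgEquiv')).trace

namespace IsSymm

section CommRing

variable [CommRing R] {P : Matrix ι ι R}

theorem sum_mul_apply_of_isIdempotentElem (hs : P.IsSymm) (hi : IsIdempotentElem P) (i j : ι) :
    ∑ l, P i l * P j l = P i j := by
  conv_rhs => rw [← hi.eq, mul_apply]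
  simp only [hs.apply]

theorem sum_sq_apply_of_isIdempotentElem (hs : P.IsSymm) (hi : IsIdempotentElem P) (i : ι) :
    ∑ j, P i j ^ 2 = P i i := by
  simpa only [sq] using hs.sum_mul_apply_of_isIdempotentElem hi i i

variable [LinearOrder R] [IsStrictOrderedRing R]

theorem sq_apply_le_of_isIdempotentElem (hs : P.IsSymm) (hi : IsIdempotentElem P) (i j : ι) :
    P i j ^ 2 ≤ P i i * P j j := by
  rw [← hs.sum_mul_apply_of_isIdempotentElem hi, ← hs.sum_sq_apply_of_isIdempotentElem hi,
    ← hs.sum_sq_apply_of_isIdempotentElem hi]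
  exact sum_mul_sq_le_sq_mul_sq _ _ _

theorem sq_apply_le_one_sub_of_isIdempotentElem [DecidableEq ι] (hs : P.IsSymm)
    (hi : IsIdempotentElem P) {i j : ι} (hij : i ≠ j) :
    P i j ^ 2 ≤ (1 - P i i) * (1 - P j j) := by
  simpa [one_apply_ne hij] using (isSymm_one.sub hs).sq_apply_le_of_isIdempotentElem hi.one_sub i j

end CommRing

/- Split at `P i i = 1/2` and `P j j = 1/2`: if both are large, `1 - P` controls `P i j`; if both
are small, the correlation is at most `1 < 4 (1 - P i i) (1 - P j j)`; otherwise one factor of the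
denominator is at least `1/2`. -/
theorem sq_apply_div_le_of_isIdempotentElem [Field R] [LinearOrder R] [IsStrictOrderedRing R]
    {P : Matrix ι ι R} [DecidableEq ι] (hs : P.IsSymm)
    (hi : IsIdempotentElem P) {i j : ι} (hij : i ≠ j) (hPi : 0 < P i i) (hPj : 0 < P j j) :
    P i j ^ 2 / (P i i * P j j) ≤
      4 * ((1 - P i i) * (1 - P j j)) + 2 * (P i j ^ 2 / P i i) + 2 * (P i j ^ 2 / P j j) := by
  have hP := hs.sq_apply_le_of_isIdempotentElem hi i j
  have hQ := hs.sq_apply_le_one_sub_of_isIdempotentElem hi hij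
  set x := P i i
  set y := P j j
  set p := P i j ^ 2
  have hp : 0 ≤ p := sq_nonneg _
  have hQ0 : 0 ≤ (1 - x) * (1 - y) := hp.trans hQ
  have hxy : 0 < x * y := mul_pos hPi hPj
  have hpx : 0 ≤ 2 * (p / x) := by positivity
  have hpy : 0 ≤ 2 * (p / y) := by positivity
  rcases lt_or_ge x 2⁻¹ with hx | hx <;> rcases lt_or_ge y 2⁻¹ with hy | hy
  · have : p / (x * y) ≤ 1 := (div_le_one hxy).mpr hP
    nlinarith
  · have : p / (x * y) ≤ 2 * (p / x) := by
      rw [← div_div, div_le_iff₀ hPj]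
      nlinarith
    linarith
  · have : p / (x * y) ≤ 2 * (p / y) := by
      rw [mul_comm, ← div_div, div_le_iff₀ hPi]
      nlinarith
    linarith
  · have : p / (x * y) ≤ 4 * ((1 - x) * (1 - y)) := by
      rw [div_le_iff₀ hxy]
      nlinarith [mul_le_mul_of_nonneg_left (by nlinarith : (1 : R) ≤ 4 * (x * y)) hQ0]
    linarith

theorem sum_offDiag_sq_apply_div_eq [Field R] {P : Matrix ι ι R} [DecidableEq ι]
    (hs : P.IsSymm) (hi : IsIdempotentElem P) (hdiag : ∀ i, P i i ≠ 0) :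
    ∑ q ∈ univ.offDiag, P q.1 q.2 ^ 2 / P q.1 q.1 = ∑ i, (1 - P i i) := by
  have hrow i : ∑ j, P i j ^ 2 / P i i = 1 := by
    rw [← sum_div, hs.sum_sq_apply_of_isIdempotentElem hi, div_self (hdiag i)]
  rw [sum_offDiag_eq_sum_sub_sum_diag univ fun i j => P i j ^ 2 / P i i,
    sum_congr rfl fun i _ => hrow i, sum_sub_distrib]
  simp only [sq, mul_self_div_self]

end IsSymm

end Matrix

/-- Let `P` be an `n × n` orthogonal projection matrix (symmetric idempotent) of rank `k`
with strictly positive diagonal, and let `C = D^{-1/2} P D^{-1/2}` be the associated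
correlation matrix, `D = Diag(P)`.  Then with `r = n - k`,
`∑_{i<j} Cᵢⱼ² ≤ 2r² + 6r`. -/
theorem projectionCorrelationWeak (n k : ℕ) (P : Matrix (Fin n) (Fin n) ℝ)
    (hsym : P.IsSymm) (hidem : P * P = P) (hrank : P.rank = k)
    (hdiag : ∀ i, 0 < P i i) :
    ∑ q ∈ Finset.univ.filter (fun q : Fin n × Fin n => q.1 < q.2),
        (P q.1 q.2 / (Real.sqrt (P q.1 q.1) * Real.sqrt (P q.2 q.2))) ^ 2 ≤
      2 * ((n : ℝ) - k) ^ 2 + 6 * ((n : ℝ) - k) := by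
  set r : ℝ := n - k
  have hr : 0 ≤ r := sub_nonneg.mpr (by exact_mod_cast hrank ▸ P.rank_le_width)
  have htrace : ∑ i, P i i = k := hrank ▸ trace_eq_rank_of_isIdempotentElem hidem
  have hcodiag : ∑ i, (1 - P i i) = r := by simp [sum_sub_distrib, htrace, r]
  have hA := sum_offDiag_mul_le_sq_sum univ fun i => 1 - P i i
  have hB := hsym.sum_offDiag_sq_apply_div_eq hidem fun i => (hdiag i).ne'
  rw [hcodiag] at hA hB
  let G i j := 2 * ((1 - P i i) * (1 - P j j)) + 2 * (P i j ^ 2 / P i i)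
  calc _ = ∑ q ∈ univ.filter (fun q : Fin n × Fin n => q.1 < q.2),
          P q.1 q.2 ^ 2 / (P q.1 q.1 * P q.2 q.2) :=
        sum_congr rfl fun q _ => by
          rw [div_pow, mul_pow, Real.sq_sqrt (hdiag _).le, Real.sq_sqrt (hdiag _).le]
    _ ≤ ∑ q ∈ univ.filter (fun q : Fin n × Fin n => q.1 < q.2), (G q.1 q.2 + G q.2 q.1) :=
        sum_le_sum fun q hq =>
          (hsym.sq_apply_div_le_of_isIdempotentElem hidem (mem_filter.mp hq).2.ne (hdiag _)
            (hdiag _)).trans_eq (by dsimp only [G]; rw [hsym.apply q.1 q.2]; ring)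
    _ = 2 * ∑ q ∈ univ.offDiag, (1 - P q.1 q.1) * (1 - P q.2 q.2) +
          2 * ∑ q ∈ univ.offDiag, P q.1 q.2 ^ 2 / P q.1 q.1 := by
        rw [sum_filter_lt_add_swap G, sum_add_distrib, mul_sum, mul_sum]
    _ ≤ 2 * r ^ 2 + 6 * r := by linarith
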